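/- For every synchronizing complete deterministic finite automaton A = (Q, Σ, δ) with |Σ| = m ≥ 2 letters there exists a synchronizing 2-letter automaton B = (Q', {0, 1}, δ') such that rt(A) · ⌈log₂ m + 1⌉ ≤ rt(B) ≤ ⌈log₂ m + 1⌉ · (1 + rt(A)) and |Q'| ≤ 2 m |Q|. -/

import Mathlib

/-!
Write each letter `a < m` as its `(c + 1)`-bit binary code, `c = ⌈log₂ m⌉`, whose leading bit is
therefore `0`. The automaton `B` runs `A` alongside a decoder whose states are the internal nodes
of the binary trie of these codes: a completed code `a` is applied to `A`, and a completed or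
invalid code sends the decoder back to the root. Every letter applied to `A` costs `c + 1` bits,
which gives the lower bound. Conversely `c + 1` ones bring the decoder to the root from any state
(`1` is never a valid first bit), after which the codes of a shortest reset word of `A` reset `B`.
The trie has at most `m + c ≤ 2m` internal nodes.
-/

/-- The action of a word `w` on a state `q` in the DFA with transition function `δ`. -/
def wordAct {Q A : Type*} (δ : Q → A → Q) (q : Q) (w : List A) : Q :=
  w.foldl δ q

/-- `w` is a reset word: it sends all states to one common state. -/
def IsResetWord {Q A : Type*} (δ : Q → A → Q) (w : List A) : Prop :=
  ∀ p q : Q, wordAct δ p w = wordAct δ q w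

/-- A DFA is synchronizing if it admits a reset word. -/
def Synchronizing {Q A : Type*} (δ : Q → A → Q) : Prop :=
  ∃ w : List A, IsResetWord δ w

/-- The reset threshold: the minimum length of a reset word. -/
noncomputable def resetThreshold {Q A : Type*} (δ : Q → A → Q) : ℕ :=
  sInf {n : ℕ | ∃ w : List A, w.length = n ∧ IsResetWord δ w}

open Finset

section ResetThreshold

variable {Q A : Type*} {δ : Q → A → Q}

theorem wordAct_cons (δ : Q → A → Q) (q : Q) (a : A) (w : List A) :
    wordAct δ q (a :: w) = wordAct δ (δ q a) w :=
  rfl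

theorem wordAct_append (δ : Q → A → Q) (q : Q) (u v : List A) :
    wordAct δ q (u ++ v) = wordAct δ (wordAct δ q u) v :=
  List.foldl_append

theorem resetThreshold_le {w : List A} (h : IsResetWord δ w) : resetThreshold δ ≤ w.length :=
  Nat.sInf_le ⟨w, rfl, h⟩

theorem Synchronizing.exists_length_eq_resetThreshold (h : Synchronizing δ) :
    ∃ w, IsResetWord δ w ∧ w.length = resetThreshold δ := by
  obtain ⟨w, hw⟩ := h
  obtain ⟨u, hu, hreset⟩ := Nat.sInf_mem (s := {n | ∃ w : List A, w.length = n ∧ IsResetWord δ w})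
    ⟨_, w, rfl, hw⟩
  exact ⟨u, hreset, hu⟩

end ResetThreshold

section Cascade

variable {Q S A B : Type*}

-- A transducer `τ : S → B → Option A × S` emits at most one letter of `A` per letter read.

def nextState (τ : S → B → Option A × S) (s : S) (b : B) : S :=
  (τ s b).2

def outputWord (τ : S → B → Option A × S) : S → List B → List A
  | _, [] => []
  | s, b :: w => (τ s b).1.toList ++ outputWord τ (τ s b).2 w

def cascade (δ : Q → A → Q) (τ : S → B → Option A × S) (x : Q × S) (b : B) : Q × S :=
  ((τ x.2 b).1.elim x.1 (δ x.1), (τ x.2 b).2)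

theorem wordAct_cascade (δ : Q → A → Q) (τ : S → B → Option A × S) (w : List B) (q : Q) (s : S) :
    wordAct (cascade δ τ) (q, s) w
      = (wordAct δ q (outputWord τ s w), wordAct (nextState τ) s w) := by
  induction w generalizing q s with
  | nil => rfl
  | cons b w ih =>
    rw [wordAct_cons, cascade, ih, outputWord, wordAct_append, wordAct_cons]
    cases (τ s b).1 <;> rfl

theorem IsResetWord.of_cascade {δ : Q → A → Q} {τ : S → B → Option A × S} {w : List B}
    (h : IsResetWord (cascade δ τ) w) (s₀ : S) : IsResetWord δ (outputWord τ s₀ w) := fun p q => by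
  simpa only [wordAct_cascade] using congrArg Prod.fst (h (p, s₀) (q, s₀))

variable {δ : Q → A → Q} {τ : S → B → Option A × S} {s₀ : S} {flush : List B}
  {enc : A → List B} {n : ℕ}

theorem wordAct_cascade_flatMap
    (henc : ∀ a, outputWord τ s₀ (enc a) = [a] ∧ wordAct (nextState τ) s₀ (enc a) = s₀)
    (w : List A) (q : Q) :
    wordAct (cascade δ τ) (q, s₀) (w.flatMap enc) = (wordAct δ q w, s₀) := by
  induction w generalizing q with
  | nil => rfl
  | cons a w ih =>
    rw [List.flatMap_cons, wordAct_append, wordAct_cascade δ τ (enc a), (henc a).1, (henc a).2]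
    exact ih (δ q a)

theorem IsResetWord.cascade (hflush : ∀ s, wordAct (nextState τ) s flush = s₀)
    (henc : ∀ a, outputWord τ s₀ (enc a) = [a] ∧ wordAct (nextState τ) s₀ (enc a) = s₀)
    {w : List A} (h : IsResetWord δ w) : IsResetWord (cascade δ τ) (flush ++ w.flatMap enc) := by
  rintro ⟨p, s⟩ ⟨q, t⟩
  simp only [wordAct_append, wordAct_cascade, hflush, wordAct_cascade_flatMap henc]
  exact congrArg (·, s₀) (h _ _)

theorem exists_isResetWord_cascade (hflush : ∀ s, wordAct (nextState τ) s flush = s₀)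
    (henc : ∀ a, outputWord τ s₀ (enc a) = [a] ∧ wordAct (nextState τ) s₀ (enc a) = s₀)
    (hlen : ∀ a, (enc a).length = n) (h : Synchronizing δ) :
    ∃ W, IsResetWord (cascade δ τ) W ∧ W.length = flush.length + n * resetThreshold δ := by
  obtain ⟨w, hw, hwlen⟩ := h.exists_length_eq_resetThreshold
  refine ⟨_, hw.cascade hflush henc, ?_⟩
  simp [List.length_flatMap, hlen, hwlen, mul_comm]

theorem resetThreshold_mul_le_cascade (hout : ∀ w, n * (outputWord τ s₀ w).length ≤ w.length)
    (h : Synchronizing (cascade δ τ)) : resetThreshold δ * n ≤ resetThreshold (cascade δ τ) := by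
  obtain ⟨w, hw, hwlen⟩ := h.exists_length_eq_resetThreshold
  calc resetThreshold δ * n ≤ (outputWord τ s₀ w).length * n :=
        Nat.mul_le_mul_right n (resetThreshold_le (hw.of_cascade s₀))
    _ ≤ w.length := by rw [mul_comm]; exact hout w
    _ = resetThreshold (cascade δ τ) := hwlen

end Cascade

theorem sum_range_div_two_pow_succ_le (M n : ℕ) : ∑ i ∈ range n, M / 2 ^ (i + 1) ≤ M := by
  suffices h : ∑ i ∈ range n, M / 2 ^ (i + 1) + M / 2 ^ n ≤ M from (Nat.le_add_right _ _).trans h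
  induction n with
  | zero => simp
  | succ n ih =>
    have hhalf : M / 2 ^ (n + 1) = M / 2 ^ n / 2 := by rw [pow_succ, Nat.div_div_eq_div_mul]
    rw [sum_range_succ]
    omega

theorem two_mul_div_two_pow_succ_add_testBit (a k : ℕ) :
    2 * (a / 2 ^ (k + 1)) + (a.testBit k).toNat = a / 2 ^ k := by
  rw [Nat.toNat_testBit, pow_succ, ← Nat.div_div_eq_div_mul]
  omega

/-- The `k` lowest bits of `a`, most significant first. -/
def lowBits (a : ℕ) : ℕ → List Bool
  | 0 => []
  | k + 1 => a.testBit k :: lowBits a k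

theorem length_lowBits (a k : ℕ) : (lowBits a k).length = k := by
  induction k with
  | zero => rfl
  | succ k ih => simp [lowBits, ih]

/-- The first `len ≤ c` bits of the `(c + 1)`-bit code of a letter `a < m`, read as a number:
these are exactly the `val` with `val * 2 ^ (c + 1 - len) < m`. -/
@[ext]
structure CodePrefix (m c : ℕ) where
  len : ℕ
  val : ℕ
  len_le : len ≤ c
  val_mul_lt : val * 2 ^ (c + 1 - len) < m

namespace CodePrefix

variable {m c : ℕ}

def toSigma (p : CodePrefix m c) : Σ k : Fin (c + 1), Fin ((m - 1) / 2 ^ (k.1 + 1) + 1) :=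
  ⟨⟨c - p.len, by omega⟩, ⟨p.val, Nat.lt_succ_of_le <| (Nat.le_div_iff_mul_le (by positivity)).2 <| by
    rw [show c - p.len + 1 = c + 1 - p.len by have := p.len_le; omega]
    have := p.val_mul_lt
    omega⟩⟩

theorem toSigma_injective : Function.Injective (toSigma (m := m) (c := c)) := by
  intro p q h
  simp only [toSigma, Sigma.mk.inj_iff, Fin.mk.injEq] at h
  obtain ⟨hlen, hval⟩ := h
  have hlen' : p.len = q.len := by have := p.len_le; have := q.len_le; omega
  ext
  · exact hlen'
  · exact (Fin.heq_ext_iff (by rw [hlen])).1 hval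

noncomputable instance : Fintype (CodePrefix m c) :=
  Fintype.ofInjective _ toSigma_injective

theorem card_le [NeZero m] : Fintype.card (CodePrefix m c) ≤ m + c := by
  have hm := Nat.pos_of_neZero m
  calc Fintype.card (CodePrefix m c)
      ≤ Fintype.card (Σ k : Fin (c + 1), Fin ((m - 1) / 2 ^ (k.1 + 1) + 1)) :=
        Fintype.card_le_of_injective _ toSigma_injective
    _ = ∑ k ∈ range (c + 1), (m - 1) / 2 ^ (k + 1) + (c + 1) := by
        simp [Fintype.card_sigma, Fin.sum_univ_eq_sum_range (fun k => (m - 1) / 2 ^ (k + 1) + 1),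
          sum_add_distrib]
    _ ≤ m - 1 + (c + 1) := by gcongr; exact sum_range_div_two_pow_succ_le _ _
    _ = m + c := by omega

variable [NeZero m]

def root : CodePrefix m c :=
  ⟨0, 0, Nat.zero_le c, by simpa using Nat.pos_of_neZero m⟩

@[simp]
theorem len_root : (root : CodePrefix m c).len = 0 :=
  rfl

def extend (len val : ℕ) : CodePrefix m c :=
  if h : len ≤ c ∧ val * 2 ^ (c + 1 - len) < m then ⟨len, val, h.1, h.2⟩ else root

def step (p : CodePrefix m c) (b : Bool) : Option (Fin m) × CodePrefix m c :=
  (if h : p.len = c ∧ 2 * p.val + b.toNat < m then some ⟨_, h.2⟩ else none,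
    extend (p.len + 1) (2 * p.val + b.toNat))

theorem step_snd (p : CodePrefix m c) (b : Bool) :
    (step p b).2 = extend (p.len + 1) (2 * p.val + b.toNat) :=
  rfl

theorem extend_eq_root_or_len_eq (len val : ℕ) :
    extend len val = (root : CodePrefix m c) ∨ (extend len val : CodePrefix m c).len = len := by
  unfold extend
  split
  · exact Or.inr rfl
  · exact Or.inl rfl

theorem len_step_snd_le (p : CodePrefix m c) (b : Bool) : (step p b).2.len ≤ p.len + 1 := by
  rw [step_snd]
  rcases extend_eq_root_or_len_eq (m := m) (c := c) (p.len + 1) (2 * p.val + b.toNat) with h | h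
  · rw [h, len_root]; omega
  · exact h.le

theorem step_fst_of_len_ne {p : CodePrefix m c} (h : p.len ≠ c) (b : Bool) : (step p b).1 = none :=
  dif_neg fun h' => h h'.1

theorem step_snd_of_len_eq {p : CodePrefix m c} (h : p.len = c) (b : Bool) :
    (step p b).2 = root :=
  dif_neg fun h' => by omega

theorem step_root_true (hmc : m ≤ 2 ^ c) : (step (root : CodePrefix m c) true).2 = root :=
  dif_neg fun h => by
    simp only [root, zero_add, mul_zero, Bool.toNat_true, add_tsub_cancel_right, one_mul] at h
    omega

theorem wordAct_replicate_true (hmc : m ≤ 2 ^ c) :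
    ∀ (k : ℕ) (p : CodePrefix m c), p = root ∨ c < p.len + k →
      wordAct (nextState step) p (List.replicate k true) = root
  | 0, p, h => h.resolve_right (by simpa using p.len_le)
  | k + 1, p, h => by
    rw [List.replicate_succ, wordAct_cons]
    apply wordAct_replicate_true hmc k
    rcases h with rfl | h
    · exact Or.inl (step_root_true hmc)
    · rcases extend_eq_root_or_len_eq (m := m) (c := c) (p.len + 1) (2 * p.val + true.toNat)
        with hroot | hlen
      · exact Or.inl hroot
      · exact Or.inr (by rw [nextState, step_snd, hlen]; omega)

theorem wordAct_flush (hmc : m ≤ 2 ^ c) (p : CodePrefix m c) :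
    wordAct (nextState step) p (List.replicate (c + 1) true) = root :=
  wordAct_replicate_true hmc _ p (Or.inr (by omega))

theorem mul_length_outputWord_le (w : List Bool) (p : CodePrefix m c) :
    (c + 1) * (outputWord step p w).length ≤ p.len + w.length := by
  induction w generalizing p with
  | nil => simp [outputWord]
  | cons b w ih =>
    have hnext := ih (step p b).2
    rw [outputWord, List.length_append, List.length_cons]
    by_cases hp : p.len = c
    · rw [step_snd_of_len_eq hp] at hnext ⊢
      have : (step p b).1.toList.length ≤ 1 := by cases (step p b).1 <;> simp
      rw [len_root] at hnext
      nlinarith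
    · have := len_step_snd_le p b
      rw [step_fst_of_len_ne hp]
      simp only [Option.toList_none, List.length_nil, zero_add]
      omega

theorem step_lowBits {a : ℕ} (ha : a < m) :
    ∀ (k : ℕ) (p : CodePrefix m c), p.len + k = c → p.val = a / 2 ^ (k + 1) →
      outputWord step p (lowBits a (k + 1)) = [⟨a, ha⟩] ∧
        wordAct (nextState step) p (lowBits a (k + 1)) = root
  | 0, p, hlen, hval => by
    have hbit : 2 * p.val + (a.testBit 0).toNat = a := by
      rw [hval, two_mul_div_two_pow_succ_add_testBit, pow_zero, Nat.div_one]
    have hout : (step p (a.testBit 0)).1 = some ⟨a, ha⟩ := by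
      simp only [step, hbit]
      rw [dif_pos ⟨hlen, ha⟩]
    refine ⟨?_, step_snd_of_len_eq hlen _⟩
    rw [lowBits, lowBits, outputWord, hout]
    rfl
  | k + 1, p, hlen, hval => by
    have hbit : 2 * p.val + (a.testBit (k + 1)).toNat = a / 2 ^ (k + 1) := by
      rw [hval, two_mul_div_two_pow_succ_add_testBit]
    have hchild : (a / 2 ^ (k + 1)) * 2 ^ (c + 1 - (p.len + 1)) < m := by
      rw [show c + 1 - (p.len + 1) = k + 1 by omega]
      exact (Nat.div_mul_le_self _ _).trans_lt ha
    have hstep : step p (a.testBit (k + 1)) =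
        (none, ⟨p.len + 1, a / 2 ^ (k + 1), by omega, hchild⟩) := by
      refine Prod.ext (step_fst_of_len_ne (by omega) _) ?_
      rw [step_snd, hbit, extend, dif_pos ⟨by omega, hchild⟩]
    rw [lowBits, outputWord, wordAct_cons, nextState, hstep]
    exact step_lowBits ha k _ (by simp only; omega) rfl

theorem step_lowBits_root (hmc : m ≤ 2 ^ c) (a : Fin m) :
    outputWord step (root : CodePrefix m c) (lowBits a (c + 1)) = [a] ∧
      wordAct (nextState step) (root : CodePrefix m c) (lowBits a (c + 1)) = root :=
  step_lowBits a.isLt c root (zero_add c)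
    (Nat.div_eq_of_lt (a.isLt.trans_le (hmc.trans (Nat.pow_le_pow_right two_pos c.le_succ)))).symm

end CodePrefix

theorem exists_two_letter_encoding_general {Q : Type} [Fintype Q] {m : ℕ}
    (hm : 2 ≤ m) (δ : Q → Fin m → Q) (hsync : Synchronizing δ) :
    ∃ (Q' : Type) (_ : Fintype Q') (δ' : Q' → Bool → Q'),
      Synchronizing δ' ∧
      resetThreshold δ * (Nat.clog 2 m + 1) ≤ resetThreshold δ' ∧
      resetThreshold δ' ≤ (Nat.clog 2 m + 1) * (1 + resetThreshold δ) ∧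
      Fintype.card Q' ≤ 2 * m * Fintype.card Q := by
  set c := Nat.clog 2 m
  have : NeZero m := ⟨by omega⟩
  have hmc : m ≤ 2 ^ c := Nat.le_pow_clog one_lt_two m
  have hcm : c ≤ m := Nat.clog_le_of_le_pow Nat.lt_two_pow_self.le
  obtain ⟨W, hW, hWlen⟩ := exists_isResetWord_cascade (δ := δ) (CodePrefix.wordAct_flush hmc)
    (CodePrefix.step_lowBits_root hmc) (fun a => length_lowBits a (c + 1)) hsync
  refine ⟨Q × CodePrefix m c, inferInstance, cascade δ CodePrefix.step, ⟨W, hW⟩, ?_, ?_, ?_⟩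
  · refine resetThreshold_mul_le_cascade (s₀ := CodePrefix.root) (fun w => ?_) ⟨W, hW⟩
    simpa using CodePrefix.mul_length_outputWord_le w (CodePrefix.root : CodePrefix m c)
  · rw [List.length_replicate] at hWlen
    calc resetThreshold (cascade δ CodePrefix.step) ≤ W.length := resetThreshold_le hW
      _ = (c + 1) * (1 + resetThreshold δ) := by rw [hWlen]; ring
  · calc Fintype.card (Q × CodePrefix m c) = Fintype.card Q * Fintype.card (CodePrefix m c) :=
          Fintype.card_prod _ _
      _ ≤ Fintype.card Q * (m + c) := Nat.mul_le_mul_left _ CodePrefix.card_le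
      _ ≤ 2 * m * Fintype.card Q := by nlinarith

/-- For every synchronizing DFA with `m ≥ 2` letters there is a synchronizing
2-letter DFA `B` with
`rt(A) · ⌈log₂ m + 1⌉ ≤ rt(B) ≤ ⌈log₂ m + 1⌉ · (1 + rt(A))` and at most `2·m·|Q|`
states.  (Here `⌈log₂ m + 1⌉ = Nat.clog 2 m + 1`.) -/
theorem exists_two_letter_encoding {Q : Type} [Fintype Q] [Nonempty Q] {m : ℕ}
    (hm : 2 ≤ m) (δ : Q → Fin m → Q) (hsync : Synchronizing δ) :
    ∃ (Q' : Type) (_ : Fintype Q') (δ' : Q' → Bool → Q'),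
      Synchronizing δ' ∧
      resetThreshold δ * (Nat.clog 2 m + 1) ≤ resetThreshold δ' ∧
      resetThreshold δ' ≤ (Nat.clog 2 m + 1) * (1 + resetThreshold δ) ∧
      Fintype.card Q' ≤ 2 * m * Fintype.card Q :=
  exists_two_letter_encoding_general hm δ hsync
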